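/- There exists a constant C > 0 such that for every measurable w : ℝ³×ℝ³ → ℝ with ‖w‖_X < ∞, the function n[w](x) := ∫_{ℝ³} w(x,v) dv is defined for almost every x ∈ ℝ³, belongs to L²(ℝ³), and satisfies ‖n[w]‖_{L²(ℝ³)} ≤ C ‖w‖_X. -/

import Mathlib

/-!
Cauchy–Schwarz in `v` against the weight `(1 + |v|²)²` gives
`|n[w](x)|² ≤ (∫ |w(x,v)|² (1 + |v|²)² dv) · ∫ (1 + |v|²)⁻² dv`, and the last integral is finite
because the dimension `3` is less than `4`. Integrating in `x` (Tonelli) yields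
`‖n[w]‖²_{L²} ≤ (∫ (1 + |v|²)⁻² dv) ‖w‖²_X`; finiteness of the inner integral for a.e. `x`
gives integrability of `w(x, ·)`.
-/

open MeasureTheory Real Filter ENNReal

noncomputable section

abbrev E3 := EuclideanSpace ℝ (Fin 3)

/-- The weighted `X`-norm `‖w‖_X = (∫∫ |w(x,v)|² (1+|v|²)² dx dv)^{1/2}`. -/
def Xnorm (w : E3 × E3 → ℝ) : ℝ≥0∞ :=
  (∫⁻ p : E3 × E3, (‖w p‖₊ : ℝ≥0∞) ^ 2 * ENNReal.ofReal ((1 + ‖p.2‖ ^ 2) ^ 2)) ^ (1/2 : ℝ)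

section

variable {α : Type*} [MeasurableSpace α] {μ : Measure α}

theorem lintegral_sq_le_lintegral_sq_mul_weight_mul_lintegral_inv {f W : α → ℝ≥0∞}
    (hf : AEMeasurable f μ) (hW : AEMeasurable W μ) (hW0 : ∀ a, W a ≠ 0) (hWtop : ∀ a, W a ≠ ⊤) :
    (∫⁻ a, f a ∂μ) ^ 2 ≤ (∫⁻ a, f a ^ 2 * W a ∂μ) * ∫⁻ a, (W a)⁻¹ ∂μ := by
  have holder := lintegral_mul_norm_pow_le ((hf.pow_const 2).mul hW) hW.inv
    (p := 2⁻¹) (q := 2⁻¹) (by norm_num) (by norm_num) (by norm_num)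
  have weight_cancels (a : α) : (f a ^ 2 * W a) ^ (2⁻¹ : ℝ) * (W a)⁻¹ ^ (2⁻¹ : ℝ) = f a := by
    rw [← mul_rpow_of_nonneg _ _ (by norm_num), mul_assoc, ENNReal.mul_inv_cancel (hW0 a) (hWtop a),
      mul_one, ← ENNReal.rpow_natCast, ← ENNReal.rpow_mul]
    norm_num
  simp only [Pi.mul_apply, Pi.inv_apply, weight_cancels, ← mul_rpow_of_nonneg _ _
    (by norm_num : (0 : ℝ) ≤ 2⁻¹)] at holder
  rw [← ENNReal.rpow_two]
  exact (le_rpow_inv_iff (by norm_num)).mp holder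

variable {β E : Type*} [MeasurableSpace β] {ν : Measure β} [NormedAddCommGroup E]
  {w : α × β → E} {W : β → ℝ≥0∞}

theorem lintegral_enorm_section_sq_le (hw : StronglyMeasurable w) (hW : Measurable W)
    (hW0 : ∀ v, W v ≠ 0) (hWtop : ∀ v, W v ≠ ⊤) (x : α) :
    (∫⁻ v, ‖w (x, v)‖ₑ ∂ν) ^ 2 ≤ (∫⁻ v, ‖w (x, v)‖ₑ ^ 2 * W v ∂ν) * ∫⁻ v, (W v)⁻¹ ∂ν :=
  lintegral_sq_le_lintegral_sq_mul_weight_mul_lintegral_inv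
    (hw.comp_measurable measurable_prodMk_left).enorm.aemeasurable hW.aemeasurable hW0 hWtop

theorem lintegral_weighted_prod_eq [SFinite ν] (hw : StronglyMeasurable w) (hW : Measurable W) :
    ∫⁻ p, ‖w p‖ₑ ^ 2 * W p.2 ∂μ.prod ν = ∫⁻ x, ∫⁻ v, ‖w (x, v)‖ₑ ^ 2 * W v ∂ν ∂μ :=
  lintegral_prod _ ((hw.enorm.pow_const 2).mul (hW.comp measurable_snd)).aemeasurable

theorem ae_integrable_section_of_lintegral_weighted_ne_top [SFinite ν] (hw : StronglyMeasurable w)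
    (hW : Measurable W) (hW0 : ∀ v, W v ≠ 0) (hWtop : ∀ v, W v ≠ ⊤)
    (hK : ∫⁻ v, (W v)⁻¹ ∂ν ≠ ⊤) (hI : ∫⁻ p, ‖w p‖ₑ ^ 2 * W p.2 ∂μ.prod ν ≠ ⊤) :
    ∀ᵐ x ∂μ, Integrable (fun v => w (x, v)) ν := by
  rw [lintegral_weighted_prod_eq hw hW] at hI
  have hF : Measurable fun x => ∫⁻ v, ‖w (x, v)‖ₑ ^ 2 * W v ∂ν :=
    ((hw.enorm.pow_const 2).mul (hW.comp measurable_snd)).lintegral_prod_right'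
  filter_upwards [ae_lt_top hF hI] with x hFx
  refine ⟨(hw.comp_measurable measurable_prodMk_left).aestronglyMeasurable, ?_⟩
  have hsq := (lintegral_enorm_section_sq_le hw hW hW0 hWtop x).trans_lt (mul_lt_top hFx hK.lt_top)
  exact (pow_lt_top_iff.mp hsq).resolve_right two_ne_zero

theorem eLpNorm_integral_section_le [SFinite ν] [NormedSpace ℝ E] (hw : StronglyMeasurable w)
    (hW : Measurable W) (hW0 : ∀ v, W v ≠ 0) (hWtop : ∀ v, W v ≠ ⊤) :
    eLpNorm (fun x => ∫ v, w (x, v) ∂ν) 2 μ ≤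
      (∫⁻ v, (W v)⁻¹ ∂ν) ^ (1 / 2 : ℝ) * (∫⁻ p, ‖w p‖ₑ ^ 2 * W p.2 ∂μ.prod ν) ^ (1 / 2 : ℝ) := by
  have hF : Measurable fun x => ∫⁻ v, ‖w (x, v)‖ₑ ^ 2 * W v ∂ν :=
    ((hw.enorm.pow_const 2).mul (hW.comp measurable_snd)).lintegral_prod_right'
  have section_bound (x : α) : ‖∫ v, w (x, v) ∂ν‖ₑ ^ (2 : ℝ) ≤
      (∫⁻ v, ‖w (x, v)‖ₑ ^ 2 * W v ∂ν) * ∫⁻ v, (W v)⁻¹ ∂ν := by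
    rw [ENNReal.rpow_two]
    exact (pow_le_pow_left₀ zero_le (enorm_integral_le_lintegral_enorm _) 2).trans
      (lintegral_enorm_section_sq_le hw hW hW0 hWtop x)
  rw [← mul_rpow_of_nonneg _ _ (by norm_num), one_div, le_rpow_inv_iff (by norm_num),
    eLpNorm_eq_lintegral_rpow_enorm_toReal two_ne_zero ofNat_ne_top, toReal_ofNat, one_div,
    rpow_inv_rpow two_ne_zero, mul_comm, lintegral_weighted_prod_eq hw hW,
    ← lintegral_mul_const _ hF]
  exact lintegral_mono section_bound

end

theorem lintegral_inv_one_add_norm_sq_sq_ne_top {F : Type*} [NormedAddCommGroup F]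
    [NormedSpace ℝ F] [FiniteDimensional ℝ F] [MeasurableSpace F] [BorelSpace F]
    (μ : Measure F) [μ.IsAddHaarMeasure] (hF : Module.finrank ℝ F < 4) :
    ∫⁻ v, (ENNReal.ofReal ((1 + ‖v‖ ^ 2) ^ 2))⁻¹ ∂μ ≠ ⊤ := by
  have hint : Integrable (fun v : F => ((1 : ℝ) + ‖v‖ ^ 2) ^ (-4 / 2 : ℝ)) μ :=
    integrable_rpow_neg_one_add_norm_sq (by exact_mod_cast hF)
  refine ne_of_eq_of_ne (lintegral_congr fun v => ?_) hint.lintegral_lt_top.ne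
  rw [← ofReal_inv_of_pos (by positivity), show (-4 / 2 : ℝ) = -(2 : ℕ) by norm_num,
    Real.rpow_neg (by positivity), Real.rpow_natCast]

/-- Prop. 2.1: for `w ∈ X`, the density `n[w](x) = ∫ w(x,v) dv` is defined a.e.,
belongs to `L²(ℝ³)` and `‖n[w]‖_{L²} ≤ C ‖w‖_X`. -/
theorem density_L2_bound :
    ∃ C : ℝ, 0 < C ∧
      ∀ w : E3 × E3 → ℝ, Measurable w → Xnorm w < ⊤ →
        (∀ᵐ x : E3, Integrable (fun v : E3 => w (x, v))) ∧
        MemLp (fun x : E3 => ∫ v : E3, w (x, v)) 2 volume ∧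
        eLpNorm (fun x : E3 => ∫ v : E3, w (x, v)) 2 volume ≤ ENNReal.ofReal C * Xnorm w := by
  set W : E3 → ℝ≥0∞ := fun v => ENNReal.ofReal ((1 + ‖v‖ ^ 2) ^ 2)
  have hW : Measurable W := by fun_prop
  have hW0 (v : E3) : W v ≠ 0 := (ofReal_pos.mpr (by positivity)).ne'
  have hWtop (v : E3) : W v ≠ ⊤ := ofReal_ne_top
  have hK : ∫⁻ v, (W v)⁻¹ ≠ ⊤ := lintegral_inv_one_add_norm_sq_sq_ne_top volume (by simp)
  refine ⟨((∫⁻ v, (W v)⁻¹) ^ (1 / 2 : ℝ)).toReal + 1, by positivity, fun w hw hX => ?_⟩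
  have hws := hw.stronglyMeasurable
  have hXnorm : Xnorm w = (∫⁻ p, ‖w p‖ₑ ^ 2 * W p.2 ∂volume.prod volume) ^ (1 / 2 : ℝ) := rfl
  have hI : ∫⁻ p, ‖w p‖ₑ ^ 2 * W p.2 ∂volume.prod volume ≠ ⊤ := by
    rw [hXnorm, rpow_lt_top_iff_of_pos (by norm_num)] at hX
    exact hX.ne
  have hbound : eLpNorm (fun x : E3 => ∫ v : E3, w (x, v)) 2 volume ≤
      ENNReal.ofReal (((∫⁻ v, (W v)⁻¹) ^ (1 / 2 : ℝ)).toReal + 1) * Xnorm w := by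
    rw [hXnorm]
    refine (eLpNorm_integral_section_le hws hW hW0 hWtop).trans ?_
    gcongr
    exact (le_ofReal_iff_toReal_le (rpow_ne_top_of_nonneg (by norm_num) hK) (by positivity)).mpr
      (le_add_of_nonneg_right zero_le_one)
  exact ⟨ae_integrable_section_of_lintegral_weighted_ne_top hws hW hW0 hWtop hK hI,
    ⟨hws.integral_prod_right'.aestronglyMeasurable,
      hbound.trans_lt (mul_lt_top ofReal_lt_top hX)⟩, hbound⟩
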